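/- Naturality of modified interlacement matrices (combinatorial form of Corollary 5): let G be a simple graph on a finite vertex set V, t a transition function on V, and v₁, …, v_k a finite sequence of vertices. Define G₀ = G, t₀ = t, and G_i = (G_{i-1})^{v_i}, t_i = (t_{i-1})^{G_{i-1}, v_i} for 1 ≤ i ≤ k. Let φ̄ be the constant transition function with value φ, and define s₀ = φ̄, s_i = (s_{i-1})^{G_{i-1}, v_i} for 1 ≤ i ≤ k. Then M(G_k, t_k) = M(G_k, s_k) · M(G₀, t₀). (In the paper's notation, with C' obtained from C by the κ-transformations at v₁,…,v_k, this is M(C', P) = M(C', C) · M(C, P).) -/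

import Mathlib

open scoped Classical

/-- The three transitions at a vertex, labeled relative to an Euler system. -/
inductive Transition : Type
  | phi | chi | psi
  deriving DecidableEq

variable {V : Type*} [Fintype V] [DecidableEq V]

/-- Simple local complement `G^v`: toggle adjacency between distinct neighbors of `v`. -/
def localComp (G : SimpleGraph V) (v : V) : SimpleGraph V where
  Adj u w := u ≠ w ∧ Xor' (G.Adj u w) (G.Adj v u ∧ G.Adj v w)
  symm := by
    constructor
    rintro u w ⟨hne, hx⟩
    refine ⟨hne.symm, ?_⟩
    rw [G.adj_comm w u, and_comm]
    exact hx
  loopless := by constructor; rintro u ⟨hne, _⟩; exact hne rfl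

/-- Modified interlacement matrix `M(G, t)` over GF(2). -/
noncomputable def Mmat (G : SimpleGraph V) (t : V → Transition) : Matrix V V (ZMod 2) :=
  Matrix.of fun w u =>
    if w = u then (if t u = Transition.chi then 0 else 1)
    else if t u = Transition.phi then 0
    else if G.Adj w u then 1 else 0

/-- Updated transition function `t^{G,v}`. -/
noncomputable def updT (G : SimpleGraph V) (v : V) (t : V → Transition) : V → Transition :=
  fun u =>
    if u = v then
      match t u with
      | Transition.phi => Transition.psi
      | Transition.psi => Transition.phi
      | Transition.chi => Transition.chi
    else if G.Adj v u then
      match t u with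
      | Transition.chi => Transition.psi
      | Transition.psi => Transition.chi
      | Transition.phi => Transition.phi
    else t u

/-- Modified local complement of a matrix, taken with respect to `G` at `v`:
add row `v` to the row of every neighbor of `v` in `G`. -/
noncomputable def modLC (G : SimpleGraph V) (v : V) (M : Matrix V V (ZMod 2)) :
    Matrix V V (ZMod 2) :=
  Matrix.of fun w u => if G.Adj v w then M w u + M v u else M w u

/-- One κ-step at `v` applied to a graph together with two transition functions:
`(G, t, s) ↦ (G^v, t^{G,v}, s^{G,v})`. -/
noncomputable def stepGTS (v : V) (p : SimpleGraph V × (V → Transition) × (V → Transition)) :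
    SimpleGraph V × (V → Transition) × (V → Transition) :=
  (localComp p.1 v, updT p.1 v p.2.1, updT p.1 v p.2.2)


/-! Write `a_u` for the `u`-th column of `A(G)`. The `u`-th column of `M(G, t)` is `e_u`, `a_u` or
`e_u + a_u` according as `t u` is `φ`, `χ` or `ψ`. A κ-step at `v` acts on `M(G, t)` as the row
operation adding row `v` to the rows of the neighbours of `v`: this operation sends `A(G)` to
`A(G^v)` plus the diagonal of neighbours of `v`, and `e_v` to `e_v + a_v`, and the update
`t ↦ t^{G,v}` exactly absorbs these correction terms. Being left multiplication by a fixed matrix,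
the row operation preserves every relation `M(G, t) = M(G, s) · B`; start from
`M(G, t) = M(G, φ̄) · M(G, t)`. -/

namespace Transition

def diagCoeff : Transition → ZMod 2
  | phi => 1
  | chi => 0
  | psi => 1

def adjCoeff : Transition → ZMod 2
  | phi => 0
  | chi => 1
  | psi => 1

end Transition

open Matrix Transition

omit [Fintype V] [DecidableEq V] in
theorem localComp_adj (G : SimpleGraph V) (v u w : V) :
    (localComp G v).Adj u w ↔ u ≠ w ∧ Xor (G.Adj u w) (G.Adj v u ∧ G.Adj v w) :=
  Iff.rfl

theorem Mmat_eq_diagonal_add (G : SimpleGraph V) (t : V → Transition) :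
    Mmat G t = diagonal (diagCoeff ∘ t) + G.adjMatrix (ZMod 2) * diagonal (adjCoeff ∘ t) := by
  ext w u
  by_cases hwu : w = u
  · subst hwu
    cases h : t w <;> simp [Mmat, diagCoeff, h]
  · cases h : t u <;> simp [Mmat, adjCoeff, hwu, h, SimpleGraph.adjMatrix_apply]

omit [Fintype V] in
theorem diagCoeff_comp_updT (G : SimpleGraph V) (v : V) (t : V → Transition) :
    diagCoeff ∘ updT G v t = diagCoeff ∘ t + G.adjMatrix (ZMod 2) v * (adjCoeff ∘ t) := by
  funext u
  by_cases huv : u = v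
  · subst huv
    cases h : t u <;> simp [updT, diagCoeff, h]
  · by_cases hvu : G.Adj v u <;> cases h : t u <;>
      simp [updT, diagCoeff, adjCoeff, huv, hvu, h, CharTwo.add_self_eq_zero]

omit [Fintype V] in
theorem adjCoeff_comp_updT (G : SimpleGraph V) (v : V) (t : V → Transition) :
    adjCoeff ∘ updT G v t = adjCoeff ∘ t + Pi.single v (diagCoeff (t v)) := by
  funext u
  by_cases huv : u = v
  · subst huv
    cases h : t u <;> simp [updT, diagCoeff, adjCoeff, h, CharTwo.add_self_eq_zero]
  · by_cases hvu : G.Adj v u <;> cases h : t u <;>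
      simp [updT, adjCoeff, huv, hvu, h]

section modLC

variable (G : SimpleGraph V) (v : V)

omit [Fintype V] [DecidableEq V] in
theorem modLC_add (M N : Matrix V V (ZMod 2)) :
    modLC G v (M + N) = modLC G v M + modLC G v N := by
  ext w u
  simp only [modLC, of_apply, Matrix.add_apply]
  split_ifs <;> ring

omit [DecidableEq V] in
theorem modLC_mul (M N : Matrix V V (ZMod 2)) :
    modLC G v (M * N) = modLC G v M * N := by
  ext w u
  simp only [modLC, of_apply, mul_apply]
  split_ifs
  · rw [← Finset.sum_add_distrib]
    exact Finset.sum_congr rfl fun x _ => by ring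
  · rfl

omit [Fintype V] in
theorem modLC_adjMatrix :
    modLC G v (G.adjMatrix (ZMod 2)) =
      (localComp G v).adjMatrix (ZMod 2) + diagonal (G.adjMatrix (ZMod 2) v) := by
  ext w u
  by_cases hwu : w = u
  · subst hwu
    by_cases hvw : G.Adj v w <;> simp [modLC, hvw, SimpleGraph.adjMatrix_apply]
  · by_cases hvw : G.Adj v w <;> by_cases hvu : G.Adj v u <;> by_cases hw : G.Adj w u <;>
      simp [modLC, localComp_adj, hwu, hvw, hvu, hw, SimpleGraph.adjMatrix_apply,
        CharTwo.add_self_eq_zero]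

theorem modLC_diagonal (d : V → ZMod 2) :
    modLC G v (diagonal d) =
      diagonal d + (localComp G v).adjMatrix (ZMod 2) * diagonal (Pi.single v (d v)) := by
  ext w u
  by_cases huv : u = v
  · subst huv
    by_cases hwu : w = u <;> by_cases hw : G.Adj w u <;>
      simp [modLC, localComp_adj, hwu, hw, G.adj_comm u w, SimpleGraph.adjMatrix_apply]
  · by_cases hvw : G.Adj v w <;> simp [modLC, huv, Ne.symm huv, hvw, diagonal_apply]

end modLC

theorem Mmat_localComp_updT (G : SimpleGraph V) (v : V) (t : V → Transition) :
    Mmat (localComp G v) (updT G v t) = modLC G v (Mmat G t) := by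
  set A := G.adjMatrix (ZMod 2)
  set A' := (localComp G v).adjMatrix (ZMod 2)
  have diagonal_add' (d₁ d₂ : V → ZMod 2) :
      diagonal (d₁ + d₂) = diagonal d₁ + diagonal d₂ :=
    (diagonal_add d₁ d₂).symm
  have diagonal_mul' (d₁ d₂ : V → ZMod 2) :
      diagonal (d₁ * d₂) = diagonal d₁ * diagonal d₂ :=
    (diagonal_mul_diagonal d₁ d₂).symm
  calc Mmat (localComp G v) (updT G v t)
      = diagonal (diagCoeff ∘ t + A v * (adjCoeff ∘ t)) +
          A' * diagonal (adjCoeff ∘ t + Pi.single v (diagCoeff (t v))) := by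
        rw [Mmat_eq_diagonal_add, diagCoeff_comp_updT, adjCoeff_comp_updT]
    _ = diagonal (diagCoeff ∘ t) + A' * diagonal (Pi.single v (diagCoeff (t v))) +
          (A' + diagonal (A v)) * diagonal (adjCoeff ∘ t) := by
        rw [diagonal_add', diagonal_add', diagonal_mul', mul_add, add_mul]
        abel
    _ = modLC G v (Mmat G t) := by
        rw [Mmat_eq_diagonal_add, modLC_add, modLC_mul, modLC_diagonal, modLC_adjMatrix]
        rfl

theorem Mmat_foldl_stepGTS_of_eq_mul (B : Matrix V V (ZMod 2)) (vs : List V)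
    (p : SimpleGraph V × (V → Transition) × (V → Transition))
    (h : Mmat p.1 p.2.1 = Mmat p.1 p.2.2 * B) :
    let q := vs.foldl (fun q v => stepGTS v q) p
    Mmat q.1 q.2.1 = Mmat q.1 q.2.2 * B := by
  induction vs generalizing p with
  | nil => exact h
  | cons v vs ih =>
    refine ih (stepGTS v p) ?_
    simp only [stepGTS, Mmat_localComp_updT, h, modLC_mul]

omit [Fintype V] in
theorem Mmat_const_phi (G : SimpleGraph V) : Mmat G (fun _ => Transition.phi) = 1 := by
  ext w u
  simp [Mmat, one_apply]

/-- naturality, Corollary 5: with `G₀ = G`, `t₀ = t`, `s₀ = φ̄` (the constant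
`φ` transition), and `G_i = G_{i-1}^{v_i}`, `t_i = t_{i-1}^{G_{i-1},v_i}`,
`s_i = s_{i-1}^{G_{i-1},v_i}`, we have `M(G_k, t_k) = M(G_k, s_k) · M(G₀, t₀)`. -/
theorem Mmat_naturality (G : SimpleGraph V) (t : V → Transition) (vs : List V) :
    let p := vs.foldl (fun q v => stepGTS v q) (G, t, fun _ => Transition.phi)
    Mmat p.1 p.2.1 = Mmat p.1 p.2.2 * Mmat G t :=
  Mmat_foldl_stepGTS_of_eq_mul _ vs _ (by rw [Mmat_const_phi, one_mul])
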